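/- arXiv:2202.01590 — 7 statements merged into one kernel-verified Lean document; each statement's English description precedes it below -/
import Mathlib

section
/- For every t ∈ (0, t₀), every λ ∈ [0,1] and every x ∈ Ω'', the closed ball B̄(x, √(C*·t)) is contained in Ω', the infimum defining f_t(x,λ) is attained (i.e. S_t(x,λ) ≠ ∅), and moreover f_t(x,λ) = min over y ∈ B̄(x, √(C*·t)) of { e^{−2Kλ}·d(x,y)²/(2t) − d_Y(u(x),u(y)) }. -/
open Metric Filter Set Topology

/-- The Hopf–Lax-type function `f_t(x,λ) = inf_{y ∈ Ω'} { e^{-2Kλ} d(x,y)²/(2t) - d_Y(u(x),u(y)) }`. -/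
noncomputable def fT {X Y : Type*} [MetricSpace X] [MetricSpace Y]
    (Ω' : Set X) (u : X → Y) (K t lam : ℝ) (x : X) : ℝ :=
  ⨅ y : Ω', (Real.exp (-2 * K * lam) * dist x (y : X) ^ 2 / (2 * t) - dist (u x) (u (y : X)))

/-- The set `S_t(x,λ)` of points of `Ω'` attaining the infimum defining `f_t(x,λ)`. -/
noncomputable def minSet {X Y : Type*} [MetricSpace X] [MetricSpace Y]
    (Ω' : Set X) (u : X → Y) (K t lam : ℝ) (x : X) : Set X :=
  {y ∈ Ω' | fT Ω' u K t lam x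
    = Real.exp (-2 * K * lam) * dist x y ^ 2 / (2 * t) - dist (u x) (u y)}

/-
The infimum over `Ω'` is localised to the compact ball `B̄(x, √(C* t))`: at `y = x` the cost
vanishes, whereas outside the ball `d(x,y)²/(2t) > osc u + 1`, and since `e^{-2Kλ} ≥ 1` the cost
is positive there. The ball lies in `Ω'` because `C* t < D²/4`, and on it the continuous cost
attains its minimum, which is therefore the minimum over all of `Ω'`.
-/

theorem closedBall_subset_of_lt_sInf_dist {X : Type*} [MetricSpace X] {A B : Set X} {x : X}
    {r : ℝ} (hx : x ∈ A) (hr : r < sInf ((fun p : X × X => dist p.1 p.2) '' (A ×ˢ Bᶜ))) :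
    closedBall x r ⊆ B := by
  intro z hz
  by_contra hzB
  have hbdd : BddBelow ((fun p : X × X => dist p.1 p.2) '' (A ×ˢ Bᶜ)) :=
    ⟨0, by rintro _ ⟨p, _, rfl⟩; exact dist_nonneg⟩
  have hle := csInf_le hbdd ⟨(x, z), ⟨hx, hzB⟩, rfl⟩
  rw [mem_closedBall, dist_comm] at hz
  exact (hle.trans hz).not_gt hr

theorem exists_isMinOn_of_isCompact_of_le_compl {α β : Type*} [TopologicalSpace α]
    [LinearOrder β] [TopologicalSpace β] [ClosedIicTopology β] {g : α → β} {s k : Set α}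
    {x : α} (hk : IsCompact k) (hx : x ∈ k) (hg : ContinuousOn g k)
    (hout : ∀ y ∈ s, y ∉ k → g x ≤ g y) :
    ∃ y₀ ∈ k, IsMinOn g k y₀ ∧ IsMinOn g s y₀ := by
  obtain ⟨y₀, hy₀, hmin⟩ := hk.exists_isMinOn ⟨x, hx⟩ hg
  refine ⟨y₀, hy₀, hmin, fun y hy => ?_⟩
  by_cases hyk : y ∈ k
  · exact hmin hyk
  · exact (hmin hx).trans (hout y hy hyk)

section HopfLax

variable {X Y : Type*} [MetricSpace X] [MetricSpace Y]

noncomputable def hopfLaxCost (u : X → Y) (K t lam : ℝ) (x y : X) : ℝ :=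
  Real.exp (-2 * K * lam) * dist x y ^ 2 / (2 * t) - dist (u x) (u y)

theorem fT_eq_iInf_hopfLaxCost (Ω' : Set X) (u : X → Y) (K t lam : ℝ) (x : X) :
    fT Ω' u K t lam x = ⨅ y : Ω', hopfLaxCost u K t lam x y :=
  rfl

@[simp]
theorem hopfLaxCost_self (u : X → Y) (K t lam : ℝ) (x : X) : hopfLaxCost u K t lam x x = 0 := by
  simp [hopfLaxCost]

theorem continuousOn_hopfLaxCost {u : X → Y} {s : Set X} (hu : ContinuousOn u s)
    (K t lam : ℝ) (x : X) : ContinuousOn (hopfLaxCost u K t lam x) s :=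
  ((continuous_const.mul ((continuous_const.dist continuous_id).pow 2)).div_const _).continuousOn
    |>.sub ((continuous_const.dist continuous_id).comp_continuousOn hu)

theorem hopfLaxCost_pos_of_sq_dist_ge {u : X → Y} {K t lam osc : ℝ} {x y : X} (hK : K ≤ 0)
    (hlam : 0 ≤ lam) (ht : 0 < t) (hosc : dist (u x) (u y) ≤ osc)
    (hfar : (2 * osc + 2) * t ≤ dist x y ^ 2) : 0 < hopfLaxCost u K t lam x y := by
  have hexp : 1 ≤ Real.exp (-2 * K * lam) := Real.one_le_exp (by nlinarith)
  have hquot : osc + 1 ≤ dist x y ^ 2 / (2 * t) := by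
    rw [le_div_iff₀ (by positivity)]
    linarith
  have hscale : dist x y ^ 2 / (2 * t) ≤ Real.exp (-2 * K * lam) * dist x y ^ 2 / (2 * t) := by
    rw [mul_div_assoc]
    exact le_mul_of_one_le_left (by positivity) hexp
  unfold hopfLaxCost
  linarith

end HopfLax

theorem stmt0_general {X Y : Type*} [MetricSpace X] [ProperSpace X] [MetricSpace Y]
    (Ω' Ω'' : Set X)
    (hsub : Ω'' ⊆ Ω')
    (u : X → Y) (hu : ContinuousOn u Ω')
    (osc : ℝ)
    (hoscBdd : BddAbove ((fun p : X × X => dist (u p.1) (u p.2)) '' (Ω' ×ˢ Ω')))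
    (hosc : osc = sSup ((fun p : X × X => dist (u p.1) (u p.2)) '' (Ω' ×ˢ Ω')))
    (K : ℝ) (hK : K ≤ 0)
    (D : ℝ) (hD : D = sInf ((fun p : X × X => dist p.1 p.2) '' (Ω'' ×ˢ Ω'ᶜ)))
    (Cstar t₀ : ℝ) (hC : Cstar = 2 * osc + 2) (ht₀ : t₀ = D ^ 2 / (4 * Cstar)) :
    ∀ t ∈ Ioo (0 : ℝ) t₀, ∀ lam ∈ Icc (0 : ℝ) 1, ∀ x ∈ Ω'',
      closedBall x (Real.sqrt (Cstar * t)) ⊆ Ω' ∧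
      (minSet Ω' u K t lam x).Nonempty ∧
      ∃ y ∈ closedBall x (Real.sqrt (Cstar * t)),
        (∀ z ∈ closedBall x (Real.sqrt (Cstar * t)),
          Real.exp (-2 * K * lam) * dist x y ^ 2 / (2 * t) - dist (u x) (u y)
            ≤ Real.exp (-2 * K * lam) * dist x z ^ 2 / (2 * t) - dist (u x) (u z)) ∧
        fT Ω' u K t lam x
          = Real.exp (-2 * K * lam) * dist x y ^ 2 / (2 * t) - dist (u x) (u y) := by
  rintro t ⟨ht, htt₀⟩ lam hlam x hx
  have hosc_le : ∀ a ∈ Ω', ∀ b ∈ Ω', dist (u a) (u b) ≤ osc := fun a ha b hb =>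
    hosc ▸ le_csSup hoscBdd ⟨(a, b), ⟨ha, hb⟩, rfl⟩
  have hCpos : 0 < Cstar := by linarith [hosc_le x (hsub hx) x (hsub hx), dist_self (u x)]
  have hD0 : 0 ≤ D := hD ▸ Real.sInf_nonneg (by rintro _ ⟨p, _, rfl⟩; exact dist_nonneg)
  have hCt : Cstar * t < D ^ 2 := by
    have : Cstar * t₀ = D ^ 2 / 4 := by rw [ht₀]; field_simp
    nlinarith [mul_lt_mul_of_pos_left htt₀ hCpos, sq_nonneg D]
  have hball : closedBall x (Real.sqrt (Cstar * t)) ⊆ Ω' := by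
    refine closedBall_subset_of_lt_sInf_dist hx (hD ▸ ?_)
    simpa [Real.sqrt_sq hD0] using Real.sqrt_lt_sqrt (by positivity) hCt
  obtain ⟨y₀, hy₀, hmin_ball, hmin⟩ := exists_isMinOn_of_isCompact_of_le_compl
    (s := Ω') (isCompact_closedBall _ _) (mem_closedBall_self (Real.sqrt_nonneg _))
    (continuousOn_hopfLaxCost (hu.mono hball) K t lam x) fun y hy hyb => by
      rw [mem_closedBall, dist_comm, not_le] at hyb
      rw [hopfLaxCost_self]
      exact (hopfLaxCost_pos_of_sq_dist_ge hK hlam.1 ht (hosc_le x (hsub hx) y hy)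
        (hC ▸ (Real.lt_sq_of_sqrt_lt hyb).le)).le
  have hfT : fT Ω' u K t lam x = hopfLaxCost u K t lam x y₀ :=
    (fT_eq_iInf_hopfLaxCost ..).trans (hmin.iInf_eq (hball hy₀))
  exact ⟨hball, ⟨y₀, hball hy₀, hfT⟩, y₀, hy₀, fun z hz => hmin_ball hz, hfT⟩

theorem stmt0 {X Y : Type*} [MetricSpace X] [ProperSpace X] [MetricSpace Y]
    (Ω' Ω'' : Set X) (hΩ'open : IsOpen Ω') (hΩ'bdd : Bornology.IsBounded Ω')
    (hΩ'ne : Ω'.Nonempty) (hΩ''open : IsOpen Ω'') (hΩ''ne : Ω''.Nonempty)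
    (hsub : Ω'' ⊆ Ω')
    (u : X → Y) (hu : ContinuousOn u Ω')
    (osc : ℝ)
    (hoscBdd : BddAbove ((fun p : X × X => dist (u p.1) (u p.2)) '' (Ω' ×ˢ Ω')))
    (hosc : osc = sSup ((fun p : X × X => dist (u p.1) (u p.2)) '' (Ω' ×ˢ Ω')))
    (K : ℝ) (hK : K ≤ 0)
    (D : ℝ) (hD : D = sInf ((fun p : X × X => dist p.1 p.2) '' (Ω'' ×ˢ Ω'ᶜ)))
    (hDpos : 0 < D)
    (Cstar t₀ : ℝ) (hC : Cstar = 2 * osc + 2) (ht₀ : t₀ = D ^ 2 / (4 * Cstar)) :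
    ∀ t ∈ Ioo (0 : ℝ) t₀, ∀ lam ∈ Icc (0 : ℝ) 1, ∀ x ∈ Ω'',
      closedBall x (Real.sqrt (Cstar * t)) ⊆ Ω' ∧
      (minSet Ω' u K t lam x).Nonempty ∧
      ∃ y ∈ closedBall x (Real.sqrt (Cstar * t)),
        (∀ z ∈ closedBall x (Real.sqrt (Cstar * t)),
          Real.exp (-2 * K * lam) * dist x y ^ 2 / (2 * t) - dist (u x) (u y)
            ≤ Real.exp (-2 * K * lam) * dist x z ^ 2 / (2 * t) - dist (u x) (u z)) ∧
        fT Ω' u K t lam x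
          = Real.exp (-2 * K * lam) * dist x y ^ 2 / (2 * t) - dist (u x) (u y) :=
  stmt0_general Ω' Ω'' hsub u hu osc hoscBdd hosc K hK D hD Cstar t₀ hC ht₀
end

section
/- For every fixed t ∈ (0, t₀), the function (x,λ) ↦ f_t(x,λ) is continuous on Ω'' × [0,1]. -/
open Metric Filter Set Topology

/-- `L_{t,λ}(x) := min { d(x,y) : y ∈ S_t(x,λ) }` (as an infimum, which is attained). -/
noncomputable def minDist {X Y : Type*} [MetricSpace X] [MetricSpace Y]
    (Ω' : Set X) (u : X → Y) (K t lam : ℝ) (x : X) : ℝ :=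
  sInf ((fun y => dist x y) '' minSet Ω' u K t lam x)

/-! The integrands `(x, λ) ↦ e^{-2Kλ} d(x,y)²/(2t) - d_Y(u x, u y)`, `y ∈ Ω'`, share a modulus of
continuity at every point of `Ω' × ℝ`: the diameter of `Ω'` controls the quadratic term uniformly
in `y`, and the reverse triangle inequality controls the second term by `d_Y(u x, u x₀)`.
An infimum of such a family, bounded below at the point, is continuous there with the same
modulus. -/

theorem continuousWithinAt_ciInf_of_abs_sub_le {α ι : Type*} [TopologicalSpace α] [Nonempty ι]
    {F : ι → α → ℝ} {s : Set α} {x₀ : α} {b : α → ℝ}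
    (hbdd : BddBelow (range fun i => F i x₀)) (hb : Tendsto b (𝓝[s] x₀) (𝓝 0))
    (hF : ∀ᶠ x in 𝓝[s] x₀, ∀ i, |F i x - F i x₀| ≤ b x) :
    ContinuousWithinAt (fun x => ⨅ i, F i x) s x₀ := by
  rw [ContinuousWithinAt, tendsto_iff_dist_tendsto_zero]
  refine squeeze_zero' (Eventually.of_forall fun _ => dist_nonneg) ?_ hb
  filter_upwards [hF] with x hx
  obtain ⟨m, hm⟩ := hbdd
  have hbdd_x : BddBelow (range fun i => F i x) := by
    refine ⟨m - b x, ?_⟩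
    rintro _ ⟨i, rfl⟩
    linarith [hm ⟨i, rfl⟩, (abs_le.1 (hx i)).1]
  rw [Real.dist_eq, abs_sub_le_iff, sub_le_iff_le_add', sub_le_iff_le_add']
  constructor
  · refine le_ciInf_add fun i => (ciInf_le hbdd_x i).trans ?_
    linarith [(abs_le.1 (hx i)).2]
  · refine le_ciInf_add fun i => (ciInf_le ⟨m, hm⟩ i).trans ?_
    linarith [(abs_le.1 (hx i)).1]

theorem abs_dist_sq_sub_dist_sq_le {X : Type*} [PseudoMetricSpace X] {x x' y : X} {M : ℝ}
    (hx : dist x y ≤ M) (hx' : dist x' y ≤ M) :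
    |dist x y ^ 2 - dist x' y ^ 2| ≤ 2 * M * dist x x' := by
  have hM : 0 ≤ M := dist_nonneg.trans hx
  rw [sq_sub_sq, abs_mul, abs_of_nonneg (by positivity)]
  exact mul_le_mul (by linarith) (abs_dist_sub_le x x' y) (abs_nonneg _) (by positivity)

theorem abs_mul_dist_sq_sub_mul_dist_sq_le {X : Type*} [PseudoMetricSpace X] {x x' y : X} {M : ℝ}
    (hx : dist x y ≤ M) (hx' : dist x' y ≤ M) (a a' : ℝ) :
    |a * dist x y ^ 2 - a' * dist x' y ^ 2| ≤ |a - a'| * M ^ 2 + |a'| * (2 * M * dist x x') := by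
  have hsq : dist x y ^ 2 ≤ M ^ 2 := pow_le_pow_left₀ dist_nonneg hx 2
  calc |a * dist x y ^ 2 - a' * dist x' y ^ 2|
      = |(a - a') * dist x y ^ 2 + a' * (dist x y ^ 2 - dist x' y ^ 2)| := by ring_nf
    _ ≤ |a - a'| * dist x y ^ 2 + |a'| * |dist x y ^ 2 - dist x' y ^ 2| :=
      (abs_add_le _ _).trans_eq (by rw [abs_mul, abs_mul, abs_of_nonneg (sq_nonneg (dist x y))])
    _ ≤ |a - a'| * M ^ 2 + |a'| * (2 * M * dist x x') := by
      gcongr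
      exact abs_dist_sq_sub_dist_sq_le hx hx'

theorem continuousOn_fT {X Y : Type*} [MetricSpace X] [MetricSpace Y] {Ω' : Set X}
    (hΩ' : Bornology.IsBounded Ω') {u : X → Y} (hu : ContinuousOn u Ω')
    (hu_bdd : Bornology.IsBounded (u '' Ω')) (K : ℝ) {t : ℝ} (ht : 0 < t) :
    ContinuousOn (fun p : X × ℝ => fT Ω' u K t p.2 p.1) (Ω' ×ˢ univ) := by
  rintro ⟨x₀, l₀⟩ ⟨hx₀, -⟩
  have : Nonempty Ω' := ⟨⟨x₀, hx₀⟩⟩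
  obtain ⟨M, hM⟩ := isBounded_iff.1 hΩ'
  obtain ⟨C, hC⟩ := isBounded_iff.1 hu_bdd
  set e : ℝ → ℝ := fun l => Real.exp (-2 * K * l)
  set b : X × ℝ → ℝ := fun p =>
    (|e p.2 - e l₀| * M ^ 2 + |e l₀| * (2 * M * dist p.1 x₀)) / (2 * t) + dist (u p.1) (u x₀)
  refine continuousWithinAt_ciInf_of_abs_sub_le (b := b) ?bdd ?lim ?bound
  case bdd =>
    refine ⟨-C, ?_⟩
    rintro _ ⟨y, rfl⟩
    have hosc := hC (mem_image_of_mem u hx₀) (mem_image_of_mem u y.2)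
    have hquad : 0 ≤ e l₀ * dist x₀ y ^ 2 / (2 * t) := by positivity
    dsimp only
    linarith
  case lim =>
    have hb : ContinuousWithinAt b (Ω' ×ˢ univ) (x₀, l₀) := by
      have hu' : ContinuousWithinAt (fun p : X × ℝ => u p.1) (Ω' ×ˢ univ) (x₀, l₀) :=
        (hu x₀ hx₀).comp continuousWithinAt_fst fun p hp => hp.1
      exact ((Continuous.continuousWithinAt (by fun_prop)).div_const _).add
        (hu'.dist continuousWithinAt_const)
    simpa [b] using hb.tendsto
  case bound =>
    filter_upwards [self_mem_nhdsWithin] with ⟨x, l⟩ hq y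
    have hx : x ∈ Ω' := hq.1
    calc _ = |(e l * dist x y ^ 2 - e l₀ * dist x₀ y ^ 2) / (2 * t)
          - (dist (u x) (u y) - dist (u x₀) (u y))| := by
          congr 1
          ring
      _ ≤ |e l * dist x y ^ 2 - e l₀ * dist x₀ y ^ 2| / (2 * t)
          + |dist (u x) (u y) - dist (u x₀) (u y)| :=
          (abs_sub _ _).trans_eq (by rw [abs_div, abs_of_pos (by positivity : (0 : ℝ) < 2 * t)])
      _ ≤ b (x, l) := by
          simp only [b]
          gcongr
          · exact abs_mul_dist_sq_sub_mul_dist_sq_le (hM hx y.2) (hM hx₀ y.2) _ _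
          · exact abs_dist_sub_le _ _ _

theorem stmt1_general {X Y : Type*} [MetricSpace X] [MetricSpace Y]
    (Ω' Ω'' : Set X) (hΩ'bdd : Bornology.IsBounded Ω')
    (hsub : Ω'' ⊆ Ω')
    (u : X → Y) (hu : ContinuousOn u Ω')
    (hoscBdd : BddAbove ((fun p : X × X => dist (u p.1) (u p.2)) '' (Ω' ×ˢ Ω')))
    (K : ℝ)
    (t₀ : ℝ) :
    ∀ t ∈ Ioo (0 : ℝ) t₀,
      ContinuousOn (fun p : X × ℝ => fT Ω' u K t p.2 p.1) (Ω'' ×ˢ Icc (0 : ℝ) 1) := by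
  intro t ht
  have hu_bdd : Bornology.IsBounded (u '' Ω') := by
    obtain ⟨C, hC⟩ := hoscBdd
    refine isBounded_iff.2 ⟨C, ?_⟩
    rintro _ ⟨x, hx, rfl⟩ _ ⟨y, hy, rfl⟩
    exact hC ⟨(x, y), ⟨hx, hy⟩, rfl⟩
  exact (continuousOn_fT hΩ'bdd hu hu_bdd K ht.1).mono (prod_mono hsub (subset_univ _))

theorem stmt1 {X Y : Type*} [MetricSpace X] [ProperSpace X] [MetricSpace Y]
    (Ω' Ω'' : Set X) (hΩ'open : IsOpen Ω') (hΩ'bdd : Bornology.IsBounded Ω')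
    (hΩ'ne : Ω'.Nonempty) (hΩ''open : IsOpen Ω'') (hΩ''ne : Ω''.Nonempty)
    (hsub : Ω'' ⊆ Ω')
    (u : X → Y) (hu : ContinuousOn u Ω')
    (osc : ℝ)
    (hoscBdd : BddAbove ((fun p : X × X => dist (u p.1) (u p.2)) '' (Ω' ×ˢ Ω')))
    (hosc : osc = sSup ((fun p : X × X => dist (u p.1) (u p.2)) '' (Ω' ×ˢ Ω')))
    (K : ℝ) (hK : K ≤ 0)
    (D : ℝ) (hD : D = sInf ((fun p : X × X => dist p.1 p.2) '' (Ω'' ×ˢ Ω'ᶜ)))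
    (hDpos : 0 < D)
    (Cstar t₀ : ℝ) (hC : Cstar = 2 * osc + 2) (ht₀ : t₀ = D ^ 2 / (4 * Cstar)) :
    ∀ t ∈ Ioo (0 : ℝ) t₀,
      ContinuousOn (fun p : X × ℝ => fT Ω' u K t p.2 p.1) (Ω'' ×ˢ Icc (0 : ℝ) 1) :=
  stmt1_general Ω' Ω'' hΩ'bdd hsub u hu hoscBdd K t₀
end

section
/- For every a > 0, all t, t' with a ≤ t < t₀ and a ≤ t' < t₀, every λ ∈ [0,1] and every x ∈ Ω'', it holds |f_t(x,λ) − f_{t'}(x,λ)| ≤ e^{−2K}·(diam Ω')²/(2a²)·|t − t'|, where diam Ω' := sup{d(y,z) : y,z ∈ Ω'}. -/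
open Metric Filter Set Topology

/-! `f_t(x,λ)` is an infimum over `y ∈ Ω'` of functions of `t` that are all `C`-Lipschitz on
`[a, ∞)` with `C = e^{-2Kλ} (diam Ω')² / (2a²)`, because `|1/t - 1/t'| ≤ |t - t'| / a²` there;
an infimum of uniformly Lipschitz functions is Lipschitz with the same constant. -/

theorem ciInf_sub_le_ciInf_of_le_add {ι : Type*} [Nonempty ι] {f g : ι → ℝ}
    (hf : BddBelow (range f)) {c : ℝ} (h : ∀ i, f i ≤ g i + c) :
    iInf f - c ≤ iInf g :=
  le_ciInf fun i => sub_le_iff_le_add.2 <| (ciInf_le hf i).trans (h i)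

theorem abs_ciInf_sub_ciInf_le {ι : Type*} [Nonempty ι] {f g : ι → ℝ}
    (hf : BddBelow (range f)) (hg : BddBelow (range g)) {c : ℝ}
    (h : ∀ i, |f i - g i| ≤ c) :
    |iInf f - iInf g| ≤ c := by
  rw [abs_sub_le_iff]
  constructor
  · have := ciInf_sub_le_ciInf_of_le_add hf fun i => sub_le_iff_le_add'.1 (abs_sub_le_iff.1 (h i)).1
    linarith
  · have := ciInf_sub_le_ciInf_of_le_add hg fun i => sub_le_iff_le_add'.1 (abs_sub_le_iff.1 (h i)).2
    linarith

theorem abs_inv_sub_inv_le_of_le {a s s' : ℝ} (ha : 0 < a) (hs : a ≤ s) (hs' : a ≤ s') :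
    |s⁻¹ - s'⁻¹| ≤ |s - s'| / a ^ 2 := by
  have hs0 : 0 < s := ha.trans_le hs
  have hs'0 : 0 < s' := ha.trans_le hs'
  calc |s⁻¹ - s'⁻¹| = |s - s'| / (s * s') := by
        rw [inv_sub_inv hs0.ne' hs'0.ne', abs_div, abs_sub_comm, abs_of_pos (mul_pos hs0 hs'0)]
    _ ≤ |s - s'| / a ^ 2 := by
        rw [sq]
        exact div_le_div_of_nonneg_left (abs_nonneg _) (by positivity)
          (mul_le_mul hs hs' ha.le hs0.le)

section HopfLax

variable {X Y : Type*} [MetricSpace X] [MetricSpace Y] {Ω' : Set X} {u : X → Y} {x : X}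

theorem bddBelow_range_hopfLax_integrand
    (hu : BddAbove ((fun p : X × X => dist (u p.1) (u p.2)) '' (Ω' ×ˢ Ω')))
    (hx : x ∈ Ω') (E : ℝ) {t : ℝ} (hE : 0 ≤ E) (ht : 0 ≤ t) :
    BddBelow (range fun y : Ω' => E * dist x (y : X) ^ 2 / (2 * t) - dist (u x) (u (y : X))) := by
  obtain ⟨M, hM⟩ := hu
  refine ⟨-M, ?_⟩
  rintro _ ⟨y, rfl⟩
  have hdist : dist (u x) (u (y : X)) ≤ M := hM ⟨(x, (y : X)), ⟨hx, y.2⟩, rfl⟩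
  have hquad : 0 ≤ E * dist x (y : X) ^ 2 / (2 * t) := by positivity
  linarith

theorem abs_fT_sub_fT_le (hΩ' : Bornology.IsBounded Ω')
    (hu : BddAbove ((fun p : X × X => dist (u p.1) (u p.2)) '' (Ω' ×ˢ Ω')))
    (hx : x ∈ Ω') (K lam : ℝ) {a t t' : ℝ} (ha : 0 < a) (ht : a ≤ t) (ht' : a ≤ t') :
    |fT Ω' u K t lam x - fT Ω' u K t' lam x|
      ≤ Real.exp (-2 * K * lam) * diam Ω' ^ 2 / (2 * a ^ 2) * |t - t'| := by
  have : Nonempty Ω' := ⟨⟨x, hx⟩⟩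
  set E := Real.exp (-2 * K * lam)
  have hE : 0 ≤ E := (Real.exp_pos _).le
  refine abs_ciInf_sub_ciInf_le
    (bddBelow_range_hopfLax_integrand hu hx E hE (ha.trans_le ht).le)
    (bddBelow_range_hopfLax_integrand hu hx E hE (ha.trans_le ht').le) fun y => ?_
  have hd : dist x (y : X) ^ 2 ≤ diam Ω' ^ 2 := by
    gcongr
    exact dist_le_diam_of_mem hΩ' hx y.2
  calc |E * dist x y ^ 2 / (2 * t) - dist (u x) (u y)
          - (E * dist x y ^ 2 / (2 * t') - dist (u x) (u y))|
      = E * dist x y ^ 2 / 2 * |t⁻¹ - t'⁻¹| := by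
        rw [← abs_of_nonneg (by positivity : 0 ≤ E * dist x y ^ 2 / 2), ← abs_mul]
        congr 1
        ring
    _ ≤ E * diam Ω' ^ 2 / 2 * (|t - t'| / a ^ 2) := by
        gcongr
        exact abs_inv_sub_inv_le_of_le ha ht ht'
    _ = E * diam Ω' ^ 2 / (2 * a ^ 2) * |t - t'| := by ring

end HopfLax

theorem stmt5_general {X Y : Type*} [MetricSpace X] [MetricSpace Y]
    (Ω' Ω'' : Set X) (hΩ'bdd : Bornology.IsBounded Ω')
    (hsub : Ω'' ⊆ Ω')
    (u : X → Y)
    (hoscBdd : BddAbove ((fun p : X × X => dist (u p.1) (u p.2)) '' (Ω' ×ˢ Ω')))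
    (K : ℝ) (hK : K ≤ 0)
    (t₀ : ℝ) :
    ∀ a > (0 : ℝ), ∀ t ∈ Ico a t₀, ∀ t' ∈ Ico a t₀, ∀ lam ∈ Icc (0 : ℝ) 1, ∀ x ∈ Ω'',
      |fT Ω' u K t lam x - fT Ω' u K t' lam x|
        ≤ Real.exp (-2 * K) * Metric.diam Ω' ^ 2 / (2 * a ^ 2) * |t - t'| := by
  intro a ha t ht t' ht' lam hlam x hx
  have hexp : Real.exp (-2 * K * lam) ≤ Real.exp (-2 * K) :=
    Real.exp_le_exp.2 (by nlinarith [hlam.2])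
  refine (abs_fT_sub_fT_le hΩ'bdd hoscBdd (hsub hx) K lam ha ht.1 ht'.1).trans ?_
  gcongr

theorem stmt5 {X Y : Type*} [MetricSpace X] [ProperSpace X] [MetricSpace Y]
    (Ω' Ω'' : Set X) (hΩ'open : IsOpen Ω') (hΩ'bdd : Bornology.IsBounded Ω')
    (hΩ'ne : Ω'.Nonempty) (hΩ''open : IsOpen Ω'') (hΩ''ne : Ω''.Nonempty)
    (hsub : Ω'' ⊆ Ω')
    (u : X → Y) (hu : ContinuousOn u Ω')
    (osc : ℝ)
    (hoscBdd : BddAbove ((fun p : X × X => dist (u p.1) (u p.2)) '' (Ω' ×ˢ Ω')))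
    (hosc : osc = sSup ((fun p : X × X => dist (u p.1) (u p.2)) '' (Ω' ×ˢ Ω')))
    (K : ℝ) (hK : K ≤ 0)
    (D : ℝ) (hD : D = sInf ((fun p : X × X => dist p.1 p.2) '' (Ω'' ×ˢ Ω'ᶜ)))
    (hDpos : 0 < D)
    (Cstar t₀ : ℝ) (hC : Cstar = 2 * osc + 2) (ht₀ : t₀ = D ^ 2 / (4 * Cstar)) :
    ∀ a > (0 : ℝ), ∀ t ∈ Ico a t₀, ∀ t' ∈ Ico a t₀, ∀ lam ∈ Icc (0 : ℝ) 1, ∀ x ∈ Ω'',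
      |fT Ω' u K t lam x - fT Ω' u K t' lam x|
        ≤ Real.exp (-2 * K) * Metric.diam Ω' ^ 2 / (2 * a ^ 2) * |t - t'| :=
  stmt5_general Ω' Ω'' hΩ'bdd hsub u hoscBdd K hK t₀
end

section
/- Let (X,d) and (Y,d_Y) be metric spaces, Ω' ⊆ X, B ⊆ Ω', u : Ω' → Y a map, and let K ∈ ℝ, A > 0, C̄ > 0, t̄ > 0. Assume that for every x ∈ B, every t ∈ (0, t̄) and every y ∈ Ω' one has d_Y(u(x),u(y)) − e^{−K}·d(x,y)²/(2t) ≤ C̄·A²·t. Then for all x, y ∈ B with d(x,y) < e^{K/2}·A·t̄ it holds d_Y(u(x),u(y)) ≤ (C̄ + 1/2)·e^{−K/2}·A·d(x,y). -/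
/-! Test the hypothesis at the scale `t = e^{-K/2} d(x,y) / A`, which balances the two terms
`e^{-K} d(x,y)² / (2t)` and `C̄ A² t`; the bound `d(x,y) < e^{K/2} A t̄` is exactly `t < t̄`. -/

open Metric Set

lemma le_of_sub_sq_div_le_at_balanced_scale {D C A s r : ℝ} (hA : 0 < A) (hs : 0 < s)
    (hr : 0 < r) (h : D - s ^ 2 * r ^ 2 / (2 * (s * r / A)) ≤ C * A ^ 2 * (s * r / A)) :
    D ≤ (C + 1 / 2) * s * A * r := by
  have hfirst : s ^ 2 * r ^ 2 / (2 * (s * r / A)) = s * A * r / 2 := by field_simp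
  have hsecond : C * A ^ 2 * (s * r / A) = C * s * A * r := by field_simp
  rw [hfirst, hsecond] at h
  linarith

lemma exp_neg_half_mul_div_lt {K A r T : ℝ} (hA : 0 < A) (hr : r < Real.exp (K / 2) * A * T) :
    Real.exp (-K / 2) * r / A < T := by
  have hinv : Real.exp (-K / 2) * Real.exp (K / 2) = 1 := by
    rw [← Real.exp_add]; ring_nf; exact Real.exp_zero
  rw [div_lt_iff₀ hA]
  calc Real.exp (-K / 2) * r < Real.exp (-K / 2) * (Real.exp (K / 2) * A * T) := by gcongr
    _ = T * A := by linear_combination A * T * hinv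

theorem stmt9_general {X Y : Type*} [MetricSpace X] [MetricSpace Y]
    (Ω' B : Set X) (hB : B ⊆ Ω') (u : X → Y)
    (K A Cbar tbar : ℝ) (hA : 0 < A)
    (h : ∀ x ∈ B, ∀ t ∈ Ioo (0 : ℝ) tbar, ∀ y ∈ Ω',
      dist (u x) (u y) - Real.exp (-K) * dist x y ^ 2 / (2 * t) ≤ Cbar * A ^ 2 * t) :
    ∀ x ∈ B, ∀ y ∈ B, dist x y < Real.exp (K / 2) * A * tbar →
      dist (u x) (u y) ≤ (Cbar + 1 / 2) * Real.exp (-K / 2) * A * dist x y := by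
  intro x hx y hy hlt
  rcases eq_or_ne x y with rfl | hxy
  · simp
  have hdist : 0 < dist x y := dist_pos.mpr hxy
  have hexp : Real.exp (-K) = Real.exp (-K / 2) ^ 2 := by
    rw [← Real.exp_nat_mul]; ring_nf
  have hscale : Real.exp (-K / 2) * dist x y / A ∈ Ioo (0 : ℝ) tbar :=
    ⟨by positivity, exp_neg_half_mul_div_lt hA hlt⟩
  have key := h x hx _ hscale y (hB hy)
  rw [hexp] at key
  exact le_of_sub_sq_div_le_at_balanced_scale hA (Real.exp_pos _) hdist key

theorem stmt9 {X Y : Type*} [MetricSpace X] [MetricSpace Y]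
    (Ω' B : Set X) (hB : B ⊆ Ω') (u : X → Y)
    (K A Cbar tbar : ℝ) (hA : 0 < A) (hC : 0 < Cbar) (ht : 0 < tbar)
    (h : ∀ x ∈ B, ∀ t ∈ Ioo (0 : ℝ) tbar, ∀ y ∈ Ω',
      dist (u x) (u y) - Real.exp (-K) * dist x y ^ 2 / (2 * t) ≤ Cbar * A ^ 2 * t) :
    ∀ x ∈ B, ∀ y ∈ B, dist x y < Real.exp (K / 2) * A * tbar →
      dist (u x) (u y) ≤ (Cbar + 1 / 2) * Real.exp (-K / 2) * A * dist x y :=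
  stmt9_general Ω' B hB u K A Cbar tbar hA h
end

section
/- Let q ∈ (1,∞) and p := q/(q−1). Then liminf_{t→0⁺} f_t(x)/t ≥ −(lip u(x))^q / q, where f_t(x) := inf_{y ∈ Ω'} { d(x,y)^p/(p·t^{p−1}) − d_Y(u(x),u(y)) }. -/
/-!
Fix `L > lip u(x)`. Near `x` we have `d_Y(u x, u y) ≤ L d(x,y)`, and Young's inequality
`L d ≤ d^p / (p t^(p-1)) + L^q t / q` bounds every such term of the infimum below by `-L^q t / q`.
Away from `x` the penalty `d(x,y)^p / (p t^(p-1))` blows up as `t → 0⁺` and dominates the bounded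
`d_Y(u x, u y)`. Hence `liminf f_t(x)/t ≥ -L^q/q`, and we let `L ↓ lip u(x)`.
-/

open Metric Filter Set Topology

theorem Real.HolderConjugate.mul_le_rpow_div_add_rpow_div_mul {p q a b t : ℝ}
    (hpq : p.HolderConjugate q) (ha : 0 ≤ a) (hb : 0 ≤ b) (ht : 0 < t) :
    b * a ≤ a ^ p / (p * t ^ (p - 1)) + b ^ q / q * t := by
  -- Young's inequality for `a t^(-1/q)` and `b t^(1/q)`
  have hs : 0 < t ^ q⁻¹ := Real.rpow_pos_of_pos ht _
  have hYoung := Real.young_inequality_of_nonneg (div_nonneg ha hs.le) (mul_nonneg hb hs.le) hpq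
  have hprod : a / t ^ q⁻¹ * (b * t ^ q⁻¹) = b * a := by field_simp
  have hpow_a : (a / t ^ q⁻¹) ^ p / p = a ^ p / (p * t ^ (p - 1)) := by
    rw [Real.div_rpow ha hs.le, ← Real.rpow_mul ht.le, inv_mul_eq_div, hpq.div_conj_eq_sub_one,
      div_div, mul_comm]
  have hpow_b : (b * t ^ q⁻¹) ^ q / q = b ^ q / q * t := by
    rw [Real.mul_rpow hb hs.le, ← Real.rpow_mul ht.le, inv_mul_cancel₀ hpq.symm.ne_zero,
      Real.rpow_one, mul_div_right_comm]
  rwa [hprod, hpow_a, hpow_b] at hYoung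

theorem nonneg_of_limsup_eq_coe {α : Type*} {l : Filter α} {g : α → ℝ} (hg : ∀ a, 0 ≤ g a)
    {c : ℝ} (h : limsup (fun a => (g a : EReal)) l = c) : 0 ≤ c := by
  have : l.NeBot := by
    rw [neBot_iff]
    rintro rfl
    simp at h
  have h0 : ((0 : ℝ) : EReal) ≤ liminf (fun a => (g a : EReal)) l :=
    le_liminf_of_le (by isBoundedDefault) (Eventually.of_forall fun a => by exact_mod_cast hg a)
  exact_mod_cast h0.trans (h ▸ liminf_le_limsup)

theorem exists_pos_dist_le_mul_of_limsup_lt {X Y : Type*} [MetricSpace X] [PseudoMetricSpace Y]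
    {u : X → Y} {x : X} {L : ℝ}
    (h : limsup (fun y => ((dist (u x) (u y) / dist x y : ℝ) : EReal)) (𝓝[≠] x) < L) :
    ∃ δ > 0, ∀ y, dist x y < δ → dist (u x) (u y) ≤ L * dist x y := by
  have hev := eventually_lt_of_limsup_lt h (by isBoundedDefault)
  obtain ⟨δ, hδ, hball⟩ := Metric.eventually_nhds_iff.1 (eventually_nhdsWithin_iff.1 hev)
  refine ⟨δ, hδ, fun y hy => ?_⟩
  rcases eq_or_ne y x with rfl | hyx
  · simp
  · have hlt : dist (u x) (u y) / dist x y < L := by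
      exact_mod_cast hball (by rwa [dist_comm]) hyx
    exact ((div_lt_iff₀ (dist_pos.2 hyx.symm)).1 hlt).le

theorem eventually_neg_mul_le_iInf_rpow_div_sub {X : Type*} [PseudoMetricSpace X] {s : Set X}
    [Nonempty s] {g : X → ℝ} {x : X} {M L δ p q : ℝ} (hpq : p.HolderConjugate q)
    (hM : ∀ y ∈ s, g y ≤ M) (hL : 0 ≤ L) (hδ : 0 < δ)
    (hLd : ∀ y, dist x y < δ → g y ≤ L * dist x y) :
    ∀ᶠ t in 𝓝[>] 0, -(L ^ q / q) * t ≤ ⨅ y : s, (dist x y ^ p / (p * t ^ (p - 1)) - g y) := by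
  have hp1 : 0 < p - 1 := sub_pos.2 hpq.lt
  have hδp : 0 < δ ^ p := Real.rpow_pos_of_pos hδ p
  have hsmall : ∀ᶠ t in 𝓝[>] (0 : ℝ), p * t ^ (p - 1) * M < δ ^ p := by
    have hcont : ContinuousAt (fun t : ℝ => p * t ^ (p - 1) * M) 0 :=
      ((Real.continuousAt_rpow_const 0 (p - 1) (Or.inr hp1.le)).const_mul p).mul_const M
    have hlim := hcont.tendsto
    rw [Real.zero_rpow hp1.ne', mul_zero, zero_mul] at hlim
    exact (tendsto_nhdsWithin_of_tendsto_nhds hlim).eventually_lt_const hδp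
  filter_upwards [self_mem_nhdsWithin, hsmall] with t (ht : 0 < t) hsmall
  have hden : 0 < p * t ^ (p - 1) := mul_pos hpq.pos (Real.rpow_pos_of_pos ht _)
  have hrate : 0 ≤ L ^ q / q * t := by
    have := Real.rpow_nonneg hL q
    have := hpq.symm.pos
    positivity
  refine le_ciInf fun ⟨y, hy⟩ => ?_
  rcases lt_or_ge (dist x y) δ with hnear | hfar
  · have := hpq.mul_le_rpow_div_add_rpow_div_mul dist_nonneg hL ht (a := dist x y)
    linarith [hLd y hnear]
  · have hpen : M ≤ dist x y ^ p / (p * t ^ (p - 1)) := by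
      rw [le_div_iff₀ hden]
      calc M * (p * t ^ (p - 1)) ≤ δ ^ p := by linarith
        _ ≤ dist x y ^ p := Real.rpow_le_rpow hδ.le hfar hpq.nonneg
    linarith [hM y hy]

theorem stmt10 {X Y : Type*} [MetricSpace X] [MetricSpace Y]
    (Ω' : Set X) (u : X → Y) (x : X) (hx : x ∈ Ω')
    (hbdd : BddAbove ((fun y => dist (u x) (u y)) '' Ω'))
    (lip : ℝ)
    (hlip : Filter.limsup (fun y => ((dist (u x) (u y) / dist x y : ℝ) : EReal)) (𝓝[≠] x)
      = (lip : EReal))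
    (q p : ℝ) (hq : 1 < q) (hp : p = q / (q - 1))
    (f : ℝ → ℝ)
    (hf : ∀ t > (0 : ℝ),
      f t = ⨅ y : Ω', (dist x (y : X) ^ p / (p * t ^ (p - 1)) - dist (u x) (u (y : X)))) :
    ((-(lip ^ q / q) : ℝ) : EReal)
      ≤ Filter.liminf (fun t : ℝ => ((f t / t : ℝ) : EReal)) (𝓝[>] (0 : ℝ)) := by
  have hpq : p.HolderConjugate q := ((Real.holderConjugate_iff_eq_conjExponent hq).2 hp).symm
  have hlip0 : 0 ≤ lip := nonneg_of_limsup_eq_coe (fun _ => div_nonneg dist_nonneg dist_nonneg) hlip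
  obtain ⟨M, hM⟩ := hbdd
  have : Nonempty Ω' := ⟨⟨x, hx⟩⟩
  have hbound : ∀ L > lip, ((-(L ^ q / q) : ℝ) : EReal)
      ≤ liminf (fun t : ℝ => ((f t / t : ℝ) : EReal)) (𝓝[>] 0) := by
    intro L hL
    obtain ⟨δ, hδ, hLd⟩ :=
      exists_pos_dist_le_mul_of_limsup_lt (u := u) (hlip.trans_lt (by exact_mod_cast hL))
    refine le_liminf_of_le (by isBoundedDefault) ?_
    filter_upwards [self_mem_nhdsWithin, eventually_neg_mul_le_iInf_rpow_div_sub hpq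
      (fun y hy => hM ⟨y, hy, rfl⟩) (hlip0.trans hL.le) hδ hLd] with t (ht : 0 < t) hle
    rw [← hf t ht] at hle
    exact_mod_cast (le_div_iff₀ ht).2 hle
  have hcont : ContinuousAt (fun L : ℝ => ((-(L ^ q / q) : ℝ) : EReal)) lip :=
    continuous_coe_real_ereal.continuousAt.comp
      ((Real.continuousAt_rpow_const lip q (Or.inr (zero_le_one.trans hq.le))).div_const q).neg
  exact le_of_tendsto (hcont.tendsto.mono_left nhdsWithin_le_nhds)
    (eventually_nhdsWithin_of_forall (s := Ioi lip) hbound)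
end

section
/- There exists t* > 0, depending only on p, l₀ and R, such that for every fixed t ∈ (0, t*): the function x ↦ f_t(x) is Lipschitz on B(o,R), and the function x ↦ L_t(x) is lower semicontinuous on B(o,R). -/
/-!
Write `g_x(y) = d(x,y)^p/(p t^(p-1)) - d(u x, u y)`, so that `f_t(x) = inf_y g_x(y)` and
`g_x(x) = 0`. Since `d(u x, u y) ≤ l₀ d(x,y)` and `p > 1`, `g_x(y) ≤ 0` forces
`d(x,y) ≤ r := (p l₀)^(1/(p-1)) t`; for `t < R/((p l₀)^(1/(p-1)) + 1)` the ball `B̄(x,r)` is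
a compact subset of `B(o,2R)`, so minimisers exist and all lie in it. On `B(o,2R)` the functions
`x ↦ g_x(y)` are uniformly Lipschitz, hence so is their infimum `f_t`. Continuity of `f_t` and `u`
makes the graph of `x ↦ S_t(x)` closed over `B(o,R)`; together with the bound `r` on its fibres,
a compactness argument shows that the distance from `x` to its nearest minimiser is lower
semicontinuous.
-/

open Metric Filter Set Topology

open scoped NNReal

theorem LipschitzOnWith.ciInf {α ι : Type*} [PseudoMetricSpace α] {f : ι → α → ℝ}
    {K : ℝ≥0} {s : Set α} (hf : ∀ i, LipschitzOnWith K (f i) s)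
    (hbdd : ∀ x ∈ s, BddBelow (range fun i => f i x)) :
    LipschitzOnWith K (fun x => ⨅ i, f i x) s := by
  refine LipschitzOnWith.of_le_add_mul K fun x hx y hy => ?_
  rcases isEmpty_or_nonempty ι with hι | hι
  · simpa [Real.iInf_of_isEmpty] using mul_nonneg K.2 dist_nonneg
  · exact sub_le_iff_le_add.mp <| le_ciInf fun i =>
      sub_le_iff_le_add.mpr <| (ciInf_le (hbdd x hx) i).trans ((hf i).le_add_mul hx hy)

theorem lowerSemicontinuousOn_sInf_dist_of_closure_graph {X : Type*} [MetricSpace X]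
    [ProperSpace X] {U : Set X} {S : X → Set X} (hne : ∀ x ∈ U, (S x).Nonempty)
    (hgraph : ∀ x ∈ U, ∀ y,
      (x, y) ∈ closure {q : X × X | q.1 ∈ U ∧ q.2 ∈ S q.1} → y ∈ S x) :
    LowerSemicontinuousOn (fun x => sInf (dist x '' S x)) U := by
  intro x hx a ha
  obtain ⟨b, hab, hb⟩ := exists_between ha
  by_contra hcon
  obtain ⟨xs, hxs, hxsU⟩ := exists_seq_forall_of_frequently
    ((not_eventually.mp hcon).and_eventually self_mem_nhdsWithin)
  have hnear : ∀ n, ∃ y ∈ S (xs n), dist (xs n) y < b := fun n => by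
    obtain ⟨_, ⟨y, hy, rfl⟩, hlt⟩ := exists_lt_of_csInf_lt ((hne _ (hxsU n).2).image _)
      ((not_lt.mp (hxsU n).1).trans_lt hab)
    exact ⟨y, hy, hlt⟩
  choose ys hysS hysb using hnear
  have hxs' : Tendsto xs atTop (𝓝 x) := hxs.mono_right nhdsWithin_le_nhds
  have hys_bdd : ∀ᶠ n in atTop, ys n ∈ closedBall x (b + 1) := by
    filter_upwards [hxs'.eventually (ball_mem_nhds x one_pos)] with n hn
    rw [mem_closedBall]
    linarith [dist_triangle_left (ys n) x (xs n), mem_ball.mp hn, hysb n]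
  obtain ⟨y, -, φ, hφ, hy⟩ :=
    tendsto_subseq_of_frequently_bounded isBounded_closedBall hys_bdd.frequently
  have hxφ : Tendsto (xs ∘ φ) atTop (𝓝 x) := hxs'.comp hφ.tendsto_atTop
  have hxy : Tendsto (fun n => (xs (φ n), ys (φ n))) atTop (𝓝 (x, y)) := hxφ.prodMk_nhds hy
  have hyS : y ∈ S x := hgraph x hx y <| mem_closure_of_tendsto hxy <|
    Eventually.of_forall fun n => ⟨(hxsU (φ n)).2, hysS (φ n)⟩
  have hdist : dist x y ≤ b :=
    le_of_tendsto (hxφ.dist hy) (Eventually.of_forall fun n => (hysb (φ n)).le)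
  have hle : sInf (dist x '' S x) ≤ dist x y :=
    csInf_le ⟨0, forall_mem_image.mpr fun _ _ => dist_nonneg⟩ (mem_image_of_mem _ hyS)
  exact (hle.trans hdist).not_gt hb

theorem lipschitzOnWith_rpow_div_mul_rpow {p t M : ℝ} (hp : 1 ≤ p) (ht : 0 < t) :
    LipschitzOnWith ((M / t) ^ (p - 1)).toNNReal (fun d : ℝ => d ^ p / (p * t ^ (p - 1)))
      (Icc 0 M) := by
  refine (convex_Icc 0 M).lipschitzOnWith_of_nnnorm_hasDerivWithin_le (fun d _ =>
    ((Real.hasDerivAt_rpow_const (Or.inr hp)).div_const _).hasDerivWithinAt) fun d hd => ?_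
  have hdt : 0 ≤ d / t := div_nonneg hd.1 ht.le
  have hMt : 0 ≤ M / t := div_nonneg (hd.1.trans hd.2) ht.le
  rw [← NNReal.coe_le_coe, coe_nnnorm, Real.coe_toNNReal _ (Real.rpow_nonneg hMt _),
    mul_div_mul_left _ _ (zero_lt_one.trans_le hp).ne', ← Real.div_rpow hd.1 ht.le,
    Real.norm_of_nonneg (Real.rpow_nonneg hdt _)]
  exact Real.rpow_le_rpow hdt (div_le_div_of_nonneg_right hd.2 ht.le) (by linarith)

theorem le_rpow_inv_mul_of_rpow_div_le_mul {p t l d : ℝ} (hp : 1 < p) (ht : 0 < t)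
    (hl : 0 ≤ l) (hd : 0 ≤ d) (h : d ^ p / (p * t ^ (p - 1)) ≤ l * d) :
    d ≤ (p * l) ^ (p - 1)⁻¹ * t := by
  have hp1 : 0 < p - 1 := sub_pos.mpr hp
  have hpl : 0 ≤ p * l := mul_nonneg (by linarith) hl
  rcases hd.eq_or_lt with rfl | hd
  · exact mul_nonneg (Real.rpow_nonneg hpl _) ht.le
  have hdp : d ^ p = d ^ (p - 1) * d := by
    rw [← Real.rpow_add_one hd.ne', sub_add_cancel]
  have hpow : d ^ (p - 1) ≤ ((p * l) ^ (p - 1)⁻¹ * t) ^ (p - 1) := by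
    rw [Real.mul_rpow (by positivity) ht.le, Real.rpow_inv_rpow hpl hp1.ne']
    rw [div_le_iff₀ (by positivity), hdp] at h
    nlinarith
  exact (Real.rpow_le_rpow_iff hd.le (by positivity) hp1).mp hpow

section HopfLax

variable {X Y : Type*} [MetricSpace X] [MetricSpace Y] {u : X → Y} {K : ℝ≥0} {V : Set X}
  {p t : ℝ} {x y : X}

noncomputable def hopfLaxObjective (u : X → Y) (p t : ℝ) (x y : X) : ℝ :=
  dist x y ^ p / (p * t ^ (p - 1)) - dist (u x) (u y)

noncomputable def hopfLaxRadius (p : ℝ) (K : ℝ≥0) (t : ℝ) : ℝ :=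
  (p * K) ^ (p - 1)⁻¹ * t

theorem hopfLaxRadius_nonneg (hp : 0 ≤ p) (ht : 0 ≤ t) : 0 ≤ hopfLaxRadius p K t :=
  mul_nonneg (Real.rpow_nonneg (mul_nonneg hp K.2) _) ht

theorem hopfLaxObjective_self (hp : p ≠ 0) : hopfLaxObjective u p t x x = 0 := by
  simp [hopfLaxObjective, Real.zero_rpow hp]

theorem neg_mul_dist_le_hopfLaxObjective (hu : LipschitzOnWith K u V) (hx : x ∈ V) (hy : y ∈ V)
    (hp : 0 ≤ p) (ht : 0 ≤ t) : -(K * dist x y) ≤ hopfLaxObjective u p t x y := by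
  have : 0 ≤ dist x y ^ p / (p * t ^ (p - 1)) := by positivity
  rw [hopfLaxObjective]
  linarith [hu.dist_le_mul x hx y hy]

theorem dist_le_of_hopfLaxObjective_nonpos (hu : LipschitzOnWith K u V) (hx : x ∈ V)
    (hy : y ∈ V) (hp : 1 < p) (ht : 0 < t) (h : hopfLaxObjective u p t x y ≤ 0) :
    dist x y ≤ hopfLaxRadius p K t :=
  le_rpow_inv_mul_of_rpow_div_le_mul hp ht K.2 dist_nonneg <|
    (sub_nonpos.mp h).trans (hu.dist_le_mul x hx y hy)

theorem lipschitzOnWith_hopfLaxObjective {s : Set X} {M : ℝ} (hu : LipschitzOnWith K u V)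
    (hsV : s ⊆ V) (hsM : s ⊆ closedBall y M) (hp : 1 ≤ p) (ht : 0 < t) :
    LipschitzOnWith (((M / t) ^ (p - 1)).toNNReal + K) (hopfLaxObjective u p t · y) s := by
  have hcost := (lipschitzOnWith_rpow_div_mul_rpow (M := M) hp ht).comp
    (LipschitzWith.dist_left y).lipschitzOnWith
    (fun x hx => ⟨dist_nonneg, mem_closedBall.mp (hsM hx)⟩)
  have hdist := (LipschitzWith.dist_left (u y)).comp_lipschitzOnWith (hu.mono hsV)
  rw [mul_one] at hcost
  rw [one_mul] at hdist
  exact hcost.sub hdist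

theorem continuousAt_hopfLaxObjective (hu : ContinuousOn u V) (hV : IsOpen V) (hx : x ∈ V)
    (hy : y ∈ V) (hp : 0 ≤ p) :
    ContinuousAt (fun q : X × X => hopfLaxObjective u p t q.1 q.2) (x, y) := by
  have hux := (hu.continuousAt (hV.mem_nhds hx)).comp (x := (x, y)) continuousAt_fst
  have huy := (hu.continuousAt (hV.mem_nhds hy)).comp (x := (x, y)) continuousAt_snd
  exact ((continuous_dist.continuousAt.rpow_const (Or.inr hp)).div_const _).sub (hux.dist huy)

noncomputable def hopfLax (u : X → Y) (V : Set X) (p t : ℝ) (x : X) : ℝ :=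
  ⨅ y : V, hopfLaxObjective u p t x y

theorem bddBelow_hopfLaxObjective (hu : LipschitzOnWith K u V) (hV : Bornology.IsBounded V)
    (hx : x ∈ V) (hp : 0 ≤ p) (ht : 0 ≤ t) :
    BddBelow (range fun y : V => hopfLaxObjective u p t x y) :=
  ⟨-(K * diam V), forall_mem_range.mpr fun y =>
    (neg_le_neg (mul_le_mul_of_nonneg_left (dist_le_diam_of_mem hV hx y.2) K.2)).trans
      (neg_mul_dist_le_hopfLaxObjective hu hx y.2 hp ht)⟩

theorem hopfLax_le (hu : LipschitzOnWith K u V) (hV : Bornology.IsBounded V) (hx : x ∈ V)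
    (hy : y ∈ V) (hp : 0 ≤ p) (ht : 0 ≤ t) :
    hopfLax u V p t x ≤ hopfLaxObjective u p t x y :=
  ciInf_le (bddBelow_hopfLaxObjective hu hV hx hp ht) ⟨y, hy⟩

theorem lipschitzOnWith_hopfLax (hu : LipschitzOnWith K u V) (hV : Bornology.IsBounded V)
    (hp : 1 ≤ p) (ht : 0 < t) :
    LipschitzOnWith (((diam V / t) ^ (p - 1)).toNNReal + K) (hopfLax u V p t) V :=
  LipschitzOnWith.ciInf
    (fun y => lipschitzOnWith_hopfLaxObjective hu subset_rfl
      (fun _ hx => mem_closedBall.mpr (dist_le_diam_of_mem hV hx y.2)) hp ht)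
    fun _ hx => bddBelow_hopfLaxObjective hu hV hx (by linarith) ht.le

def hopfLaxArgmin (u : X → Y) (V : Set X) (p t : ℝ) (x : X) : Set X :=
  {y ∈ V | hopfLax u V p t x = hopfLaxObjective u p t x y}

theorem dist_le_of_mem_hopfLaxArgmin (hu : LipschitzOnWith K u V) (hV : Bornology.IsBounded V)
    (hx : x ∈ V) (hp : 1 < p) (ht : 0 < t) (hy : y ∈ hopfLaxArgmin u V p t x) :
    dist x y ≤ hopfLaxRadius p K t := by
  refine dist_le_of_hopfLaxObjective_nonpos hu hx hy.1 hp ht ?_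
  rw [← hy.2, ← hopfLaxObjective_self (u := u) (t := t) (x := x) (by linarith : p ≠ 0)]
  exact hopfLax_le hu hV hx hx (by linarith) ht.le

theorem exists_isMinOn_hopfLaxObjective [ProperSpace X] (hu : LipschitzOnWith K u V)
    (hx : closedBall x (hopfLaxRadius p K t) ⊆ V) (hp : 1 < p) (ht : 0 < t) :
    ∃ y ∈ V, IsMinOn (hopfLaxObjective u p t x) V y := by
  set r := hopfLaxRadius p K t
  have hxr : x ∈ closedBall x r := mem_closedBall_self (hopfLaxRadius_nonneg (by linarith) ht.le)
  have hcost : Continuous fun y => dist x y ^ p / (p * t ^ (p - 1)) :=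
    ((continuous_const.dist continuous_id).rpow_const fun _ => Or.inr (by linarith)).div_const _
  have hcont : ContinuousOn (hopfLaxObjective u p t x) (closedBall x r) :=
    hcost.continuousOn.sub
      ((continuous_const.dist continuous_id).comp_continuousOn (hu.continuousOn.mono hx))
  obtain ⟨y, hyr, hmin⟩ := (isCompact_closedBall x r).exists_isMinOn ⟨x, hxr⟩ hcont
  refine ⟨y, hx hyr, fun z hz => ?_⟩
  by_cases hzr : dist x z ≤ r
  · exact hmin (mem_closedBall'.mpr hzr)
  · have hpos : 0 < hopfLaxObjective u p t x z := lt_of_not_ge fun hz0 =>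
      hzr (dist_le_of_hopfLaxObjective_nonpos hu (hx hxr) hz hp ht hz0)
    exact (hmin hxr).trans ((hopfLaxObjective_self (by linarith)).trans_le hpos.le)

theorem lowerSemicontinuousOn_sInf_dist_hopfLaxArgmin [ProperSpace X] {U : Set X}
    (hu : LipschitzOnWith K u V) (hVo : IsOpen V) (hV : Bornology.IsBounded V)
    (hU : ∀ x ∈ U, closedBall x (hopfLaxRadius p K t) ⊆ V) (hp : 1 < p) (ht : 0 < t) :
    LowerSemicontinuousOn (fun x => sInf (dist x '' hopfLaxArgmin u V p t x)) U := by
  set r := hopfLaxRadius p K t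
  have hUV : U ⊆ V := fun x hx =>
    hU x hx (mem_closedBall_self (hopfLaxRadius_nonneg (by linarith) ht.le))
  refine lowerSemicontinuousOn_sInf_dist_of_closure_graph (fun x hx => ?_) fun x hx y hxy => ?_
  · obtain ⟨y, hyV, hmin⟩ := exists_isMinOn_hopfLaxObjective hu (hU x hx) hp ht
    exact ⟨y, hyV, hmin.iInf_eq hyV⟩
  set G := {q : X × X | q.1 ∈ U ∧ q.2 ∈ hopfLaxArgmin u V p t q.1}
  have hGr : G ⊆ {q | dist q.1 q.2 ≤ r} := fun q hq =>
    dist_le_of_mem_hopfLaxArgmin hu hV (hUV hq.1) hp ht hq.2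
  have hyV : y ∈ V := hU x hx <| mem_closedBall'.mpr <|
    closure_minimal hGr (isClosed_le continuous_dist continuous_const) hxy
  have hcont : ContinuousOn (hopfLax u V p t) V :=
    (lipschitzOnWith_hopfLax hu hV hp.le ht).continuousOn
  have hF : ContinuousWithinAt (hopfLax u V p t ∘ Prod.fst) G (x, y) :=
    (hcont x (hUV hx)).comp continuousWithinAt_fst fun q hq => hUV hq.1
  have hobj : ContinuousWithinAt (fun q : X × X => hopfLaxObjective u p t q.1 q.2) G (x, y) :=
    (continuousAt_hopfLaxObjective hu.continuousOn hVo (hUV hx) hyV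
      (by linarith : (0 : ℝ) ≤ p)).continuousWithinAt
  have hgap0 :
      (fun q : X × X => hopfLax u V p t q.1 - hopfLaxObjective u p t q.1 q.2) '' G ⊆ {0} := by
    rintro _ ⟨q, hq, rfl⟩
    exact sub_eq_zero.mpr hq.2.2
  have hgap : hopfLax u V p t x - hopfLaxObjective u p t x y ∈ closure {0} :=
    closure_mono hgap0 ((hF.sub hobj).mem_closure_image hxy)
  rw [closure_singleton, mem_singleton_iff, sub_eq_zero] at hgap
  exact ⟨hyV, hgap⟩

end HopfLax

theorem stmt13_general {X Y : Type*} [MetricSpace X] [ProperSpace X] [MetricSpace Y]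
    (o : X) (R : ℝ) (hR : 0 < R)
    (u : X → Y) (l₀ : ℝ)
    (hu : ∀ x ∈ ball o (2 * R), ∀ y ∈ ball o (2 * R), dist (u x) (u y) ≤ l₀ * dist x y)
    (q p : ℝ) (hq : q ∈ Ioc (1 : ℝ) 2) (hp : p = q / (q - 1))
    (f : ℝ → X → ℝ)
    (hf : ∀ t x, f t x = ⨅ y : ball o (2 * R),
      (dist x (y : X) ^ p / (p * t ^ (p - 1)) - dist (u x) (u (y : X))))
    (S : ℝ → X → Set X)
    (hS : ∀ t x, S t x = {y ∈ ball o (2 * R) |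
      f t x = dist x y ^ p / (p * t ^ (p - 1)) - dist (u x) (u y)})
    (Lt : ℝ → X → ℝ) (hLt : ∀ t x, Lt t x = sInf ((fun y => dist x y) '' S t x)) :
    ∃ tstar > (0 : ℝ), ∀ t ∈ Ioo (0 : ℝ) tstar,
      (∃ c : NNReal, LipschitzOnWith c (f t) (ball o R)) ∧
      LowerSemicontinuousOn (Lt t) (ball o R) := by
  have hp1 : 1 < p := by
    rw [hp, one_lt_div (by linarith [hq.1])]
    linarith
  set V := ball o (2 * R)
  have huV : LipschitzOnWith l₀.toNNReal u V := LipschitzOnWith.of_dist_le_mul fun x hx y hy =>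
    (hu x hx y hy).trans (mul_le_mul_of_nonneg_right (Real.le_coe_toNNReal l₀) dist_nonneg)
  set C := (p * l₀.toNNReal) ^ (p - 1)⁻¹
  have hC : 0 ≤ C := Real.rpow_nonneg (by positivity) _
  refine ⟨R / (C + 1), by positivity, fun t ⟨ht, htR⟩ => ?_⟩
  have hCt : hopfLaxRadius p l₀.toNNReal t < R := by
    have := (lt_div_iff₀ (by positivity)).mp htR
    exact (by nlinarith : C * t < R)
  have hball : ∀ x ∈ ball o R, closedBall x (hopfLaxRadius p l₀.toNNReal t) ⊆ V :=
    fun x hx => closedBall_subset_ball' (by linarith [mem_ball.mp hx])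
  obtain rfl : f = fun t => hopfLax u V p t := funext₂ hf
  obtain rfl : S = fun t => hopfLaxArgmin u V p t := funext₂ hS
  obtain rfl : Lt = fun t x => sInf (dist x '' hopfLaxArgmin u V p t x) := funext₂ hLt
  exact ⟨⟨_, (lipschitzOnWith_hopfLax huV isBounded_ball hp1.le ht).mono
    (ball_subset_ball (by linarith))⟩,
    lowerSemicontinuousOn_sInf_dist_hopfLaxArgmin huV isOpen_ball isBounded_ball hball hp1 ht⟩

theorem stmt13 {X Y : Type*} [MetricSpace X] [ProperSpace X] [MetricSpace Y]
    (o : X) (R : ℝ) (hR : 0 < R)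
    (u : X → Y) (l₀ : ℝ) (hl₀ : 0 < l₀)
    (hu : ∀ x ∈ ball o (2 * R), ∀ y ∈ ball o (2 * R), dist (u x) (u y) ≤ l₀ * dist x y)
    (q p : ℝ) (hq : q ∈ Ioc (1 : ℝ) 2) (hp : p = q / (q - 1))
    (f : ℝ → X → ℝ)
    (hf : ∀ t x, f t x = ⨅ y : ball o (2 * R),
      (dist x (y : X) ^ p / (p * t ^ (p - 1)) - dist (u x) (u (y : X))))
    (S : ℝ → X → Set X)
    (hS : ∀ t x, S t x = {y ∈ ball o (2 * R) |
      f t x = dist x y ^ p / (p * t ^ (p - 1)) - dist (u x) (u y)})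
    (Lt : ℝ → X → ℝ) (hLt : ∀ t x, Lt t x = sInf ((fun y => dist x y) '' S t x)) :
    ∃ tstar > (0 : ℝ), ∀ t ∈ Ioo (0 : ℝ) tstar,
      (∃ c : NNReal, LipschitzOnWith c (f t) (ball o R)) ∧
      LowerSemicontinuousOn (Lt t) (ball o R) :=
  stmt13_general o R hR u l₀ hu q p hq hp f hf S hS Lt hLt
end

section
/- Let H be a real inner product space with distance d(a,b) := ‖a−b‖, let P, Q, R, S ∈ H, and let Q_m := (Q+R)/2 be the midpoint of Q and R. Then (d(P,S) − d(Q,R))·d(Q,R) ≥ ( d(P,Q_m)² − d(P,Q)² − d(Q_m,Q)² ) + ( d(S,Q_m)² − d(S,R)² − d(Q_m,R)² ). -/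
/-! Each bracket is an inner product, `⟪P - Q, Q - R⟫` and `⟪S - R, R - Q⟫`; their sum is
`⟪P - S, Q - R⟫ - ‖Q - R‖²`, so the inequality is Cauchy–Schwarz. -/

theorem dist_midpoint_sq_sub_dist_sq_sub_dist_sq {H : Type*} [NormedAddCommGroup H]
    [InnerProductSpace ℝ H] (x y z : H) :
    dist x (midpoint ℝ y z) ^ 2 - dist x y ^ 2 - dist (midpoint ℝ y z) y ^ 2 =
      inner ℝ (x - y) (y - z) := by
  have hsplit : x - midpoint ℝ y z = (x - y) - (midpoint ℝ y z - y) := by abel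
  rw [dist_eq_norm, dist_eq_norm, dist_eq_norm, hsplit, norm_sub_sq_real, midpoint_sub_left,
    real_inner_smul_right, ← neg_sub z y, inner_neg_right, invOf_eq_inv]
  ring

theorem stmt16 {H : Type*} [NormedAddCommGroup H] [InnerProductSpace ℝ H]
    (P Q R S : H) (Qm : H) (hQm : Qm = midpoint ℝ Q R) :
    (dist P S - dist Q R) * dist Q R ≥
      (dist P Qm ^ 2 - dist P Q ^ 2 - dist Qm Q ^ 2) +
        (dist S Qm ^ 2 - dist S R ^ 2 - dist Qm R ^ 2) := by
  have hP := dist_midpoint_sq_sub_dist_sq_sub_dist_sq P Q R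
  have hS := dist_midpoint_sq_sub_dist_sq_sub_dist_sq S R Q
  rw [midpoint_comm R Q, ← hQm] at hS
  rw [← hQm] at hP
  have hsum : inner ℝ (P - Q) (Q - R) + inner ℝ (S - R) (R - Q) =
      inner ℝ (P - S) (Q - R) - ‖Q - R‖ ^ 2 := by
    rw [← real_inner_self_eq_norm_sq, ← neg_sub Q R, inner_neg_right, ← sub_eq_add_neg,
      ← inner_sub_left, ← inner_sub_left]
    congr 1
    abel
  calc (dist P Qm ^ 2 - dist P Q ^ 2 - dist Qm Q ^ 2) +
        (dist S Qm ^ 2 - dist S R ^ 2 - dist Qm R ^ 2)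
      = inner ℝ (P - S) (Q - R) - ‖Q - R‖ ^ 2 := by rw [hP, hS, hsum]
    _ ≤ ‖P - S‖ * ‖Q - R‖ - ‖Q - R‖ ^ 2 := by gcongr; exact real_inner_le_norm _ _
    _ = (dist P S - dist Q R) * dist Q R := by rw [dist_eq_norm, dist_eq_norm]; ring
end
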